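/- arXiv:0711.2236 — 2 statements merged into one kernel-verified Lean document; each statement's English description precedes it below -/
import Mathlib

section
/- Let A be an n×n Manin matrix over an associative unital (possibly noncommutative) ring R, and let C be an n×n matrix all of whose entries lie in the center of R. Then both CA and AC are Manin matrices, and det^col(CA) = det^col(AC) = det(C)·det^col(A), where det(C) denotes the ordinary determinant of the matrix C with central (hence mutually commuting) entries. -/
open scoped BigOperators

/-- A matrix `M` over a (possibly noncommutative) ring is a *Manin matrix* if
entries of the same column commute and cross-commutators of 2×2 submatrices are equal. -/
def Matrix.IsManin {R : Type*} [Ring R] {n m : ℕ} (M : Matrix (Fin n) (Fin m) R) : Prop :=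
  (∀ i k : Fin n, ∀ j : Fin m, M i j * M k j = M k j * M i j) ∧
  (∀ i k : Fin n, ∀ j l : Fin m,
    M i j * M k l - M k l * M i j = M k j * M i l - M i l * M k j)

/-- Column determinant: factors multiplied in order of increasing column index. -/
noncomputable def Matrix.detCol {R : Type*} [Ring R] {n : ℕ}
    (M : Matrix (Fin n) (Fin n) R) : R :=
  ∑ σ : Equiv.Perm (Fin n),
    (Equiv.Perm.sign σ : ℤ) • ((List.finRange n).map (fun i => M (σ i) i)).prod

/-- Row determinant: factors multiplied in order of increasing row index. -/
noncomputable def Matrix.detRow {R : Type*} [Ring R] {n : ℕ}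
    (M : Matrix (Fin n) (Fin n) R) : R :=
  ∑ σ : Equiv.Perm (Fin n),
    (Equiv.Perm.sign σ : ℤ) • ((List.finRange n).map (fun i => M i (σ i))).prod

/-- Row permanent: factors multiplied in order of increasing row index. -/
noncomputable def Matrix.permRow {R : Type*} [Ring R] {n : ℕ}
    (M : Matrix (Fin n) (Fin n) R) : R :=
  ∑ σ : Equiv.Perm (Fin n), ((List.finRange n).map (fun i => M i (σ i))).prod


/-!
Expanding the entries of `C * A` and `A * C` and moving the central factors to the front gives
`detCol (C * A) = ∑_f detCol (C ∘ f) * ∏ᵢ A (f i) i` and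
`detCol (A * C) = ∑_f (∏ᵢ C (f i) i) * detCol (A ∘ f)`, where `f` runs over all maps
`Fin n → Fin n` and `M ∘ f` has columns `M _ (f j)`. For a Manin matrix `M` (a matrix with central
entries is one), `detCol` changes sign under a swap of adjacent columns (by the cross-commutator
relation) and vanishes when two adjacent columns agree (by column commutativity). Hence
`detCol (M ∘ f)` is `sign f • detCol M` for a permutation `f` and `0` otherwise, and both sums
collapse to `detCol C * detCol A`. That `C * A` and `A * C` are again Manin follows from
`⁅c x, d y⁆ = c d ⁅x, y⁆` for central `c` and `d`.
-/

open Equiv Finset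

attribute [local instance] LieRing.ofAssociativeRing

section ListProd

variable {R : Type*} [Ring R]

theorem List.prod_ofFn_sum {n : ℕ} {κ : Type*} [Fintype κ] (g : Fin n → κ → R) :
    (List.ofFn fun i => ∑ p, g i p).prod
      = ∑ f : Fin n → κ, (List.ofFn fun i => g i (f i)).prod := by
  classical
  simpa only [MultilinearMap.mkPiAlgebraFin_apply] using
    (MultilinearMap.mkPiAlgebraFin ℤ n R).map_sum g

theorem List.prod_ofFn_mul_of_mem_center {n : ℕ} (c a : Fin n → R)
    (hc : ∀ i, c i ∈ Set.center R) :
    (List.ofFn fun i => c i * a i).prod = (List.ofFn c).prod * (List.ofFn a).prod := by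
  induction n with
  | zero => simp
  | succ n ih =>
    have hcomm : Commute (a 0) (List.ofFn fun i => c (Fin.succ i)).prod :=
      Commute.list_prod_right _ _ fun y hy => by
        obtain ⟨i, rfl⟩ := (List.mem_ofFn' _ _).1 hy
        exact ((hc i.succ).comm (a 0)).symm
    simp only [List.ofFn_succ, List.prod_cons, ih (fun i => c i.succ) (fun i => a i.succ)
      fun i => hc i.succ]
    rw [mul_assoc, ← mul_assoc (a 0), hcomm.eq, mul_assoc, mul_assoc]

theorem List.prod_ofFn_sum_mul_of_mem_center {n : ℕ} {κ : Type*} [Fintype κ]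
    (c a : Fin n → κ → R) (hc : ∀ i p, c i p ∈ Set.center R) :
    (List.ofFn fun i => ∑ p, c i p * a i p).prod
      = ∑ f : Fin n → κ,
          (List.ofFn fun i => c i (f i)).prod * (List.ofFn fun i => a i (f i)).prod := by
  rw [List.prod_ofFn_sum]
  exact sum_congr rfl fun f _ => List.prod_ofFn_mul_of_mem_center _ _ fun i => hc i (f i)

theorem List.exists_prod_ofFn_eq_mul_mul {n : ℕ} (g₀ : Fin (n + 1) → R) (i : Fin n) :
    ∃ X Z : R, ∀ g : Fin (n + 1) → R, (∀ j, j ≠ i.castSucc → j ≠ i.succ → g j = g₀ j) →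
      (List.ofFn g).prod = X * (g i.castSucc * g i.succ) * Z := by
  induction n with
  | zero => exact i.elim0
  | succ n ih =>
    cases i using Fin.cases with
    | zero =>
      refine ⟨1, (List.ofFn fun j => g₀ j.succ.succ).prod, fun g hg => ?_⟩
      rw [List.ofFn_succ, List.ofFn_succ]
      simp only [List.prod_cons, one_mul, mul_assoc]
      congr 3
      exact List.ofFn_inj.2 (funext fun j => hg _ (Fin.succ_ne_zero _)
        ((Fin.succ_injective _).ne (Fin.succ_ne_zero _)))
    | succ i =>
      obtain ⟨X, Z, hXZ⟩ := ih (fun j => g₀ j.succ) i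
      refine ⟨g₀ 0 * X, Z, fun g hg => ?_⟩
      rw [← Fin.succ_castSucc] at hg ⊢
      rw [List.ofFn_succ, List.prod_cons, hg 0 (Fin.succ_ne_zero _).symm (Fin.succ_ne_zero _).symm,
        hXZ _ fun j h₁ h₂ => hg _ ((Fin.succ_injective _).ne h₁) ((Fin.succ_injective _).ne h₂)]
      simp only [mul_assoc]

end ListProd

section Perm

variable {α M : Type*} [DecidableEq α]

theorem Equiv.Perm.exists_apply_eq_apply_eq {a b j l : α} (hab : a ≠ b) (hjl : j ≠ l) :
    ∃ τ : Perm α, τ a = j ∧ τ b = l := by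
  have hl : swap a j l ≠ a := fun h =>
    hjl (by rw [swap_apply_eq_iff, swap_apply_left] at h; exact h.symm)
  refine ⟨swap a j * swap b (swap a j l), ?_, ?_⟩
  · rw [Perm.mul_apply, swap_apply_of_ne_of_ne hab hl.symm, swap_apply_left]
  · rw [Perm.mul_apply, swap_apply_left, swap_apply_self]

variable [Fintype α]

theorem Equiv.Perm.sum_sign_smul_eq_zero_of_swap_invariant [AddCommGroup M] {a b : α}
    (hab : a ≠ b) (F : Perm α → M) (hF : ∀ σ, F (σ * swap a b) = F σ) :
    ∑ σ : Perm α, (Perm.sign σ : ℤ) • F σ = 0 := by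
  refine Finset.sum_ninvolution (fun σ => σ * swap a b) (fun σ => ?_) (fun σ _ => ?_)
    (fun _ => mem_univ _) (fun σ => mul_swap_mul_self a b σ)
  · rw [Perm.sign_mul, Perm.sign_swap hab, hF]
    simp
  · rw [Ne, mul_eq_left, swap_eq_one_iff]
    exact hab

theorem Fintype.sum_pi_eq_sum_perm [AddCommMonoid M] (Φ : (α → α) → M)
    (hΦ : ∀ f, ¬Function.Injective f → Φ f = 0) :
    ∑ f : α → α, Φ f = ∑ τ : Perm α, Φ τ := by
  rw [← Finset.sum_subset (subset_univ (univ.image fun τ : Perm α => (τ : α → α)))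
      fun f _ hf => hΦ f fun hinj => hf ?_,
    Finset.sum_image fun _ _ _ _ h => Equiv.coe_fn_injective h]
  exact mem_image.2 ⟨Equiv.ofBijective f (Finite.injective_iff_bijective.1 hinj), mem_univ _, rfl⟩

end Perm

theorem Finset.sum_sum_eq_zero_of_antisymm {ι M : Type*} [Fintype ι] [AddCommGroup M]
    (x : ι → ι → M) (hx : ∀ p q, x q p = -x p q) (hdiag : ∀ p, x p p = 0) :
    ∑ p, ∑ q, x p q = 0 := by
  rw [← Fintype.sum_prod_type']
  refine sum_ninvolution Prod.swap (fun pq => ?_) (fun pq h => ?_) (fun _ => mem_univ _)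
    Prod.swap_swap
  · rw [Prod.fst_swap, Prod.snd_swap, hx, neg_add_cancel]
  · contrapose! h
    rw [← Prod.fst_swap (p := pq), h]
    exact hdiag _

theorem lie_mul_mul_of_mem_center {R : Type*} [Ring R] {c d : R} (hc : c ∈ Set.center R)
    (hd : d ∈ Set.center R) (x y : R) : ⁅c * x, d * y⁆ = c * d * ⁅x, y⁆ := by
  rw [Ring.lie_def, Ring.lie_def, (hd.comm x).symm.mul_mul_mul_comm,
    (hc.comm y).symm.mul_mul_mul_comm, ← (hc.comm d).eq, mul_sub]

namespace Matrix

variable {R : Type*} [Ring R]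

theorem detCol_eq_sum_ofFn {n : ℕ} (M : Matrix (Fin n) (Fin n) R) :
    M.detCol = ∑ σ : Perm (Fin n), (Perm.sign σ : ℤ) • (List.ofFn fun i => M (σ i) i).prod := by
  simp only [detCol, List.ofFn_eq_map]

theorem isManin_iff_lie {n m : ℕ} {M : Matrix (Fin n) (Fin m) R} :
    M.IsManin ↔ (∀ i k j, ⁅M i j, M k j⁆ = 0) ∧ ∀ i k j l, ⁅M i j, M k l⁆ = ⁅M k j, M i l⁆ := by
  simp only [IsManin, Ring.lie_def, sub_eq_zero]

theorem IsManin.submatrix {n m n' m' : ℕ} {M : Matrix (Fin n) (Fin m) R} (hM : M.IsManin)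
    (e : Fin n' → Fin n) (f : Fin m' → Fin m) : (M.submatrix e f).IsManin :=
  ⟨fun _ _ _ => hM.1 _ _ _, fun _ _ _ _ => hM.2 _ _ _ _⟩

theorem isManin_of_mem_center {n m : ℕ} {M : Matrix (Fin n) (Fin m) R}
    (hM : ∀ i j, M i j ∈ Set.center R) : M.IsManin :=
  ⟨fun i k j => ((hM i j).comm _).eq, fun i k j l => by
    rw [((hM i j).comm _).eq, ((hM k j).comm _).eq, sub_self, sub_self]⟩

section Adjacent

variable {n : ℕ} {M : Matrix (Fin (n + 1)) (Fin (n + 1)) R}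

theorem IsManin.detCol_eq_zero_of_adjacent_cols_eq (hM : M.IsManin) (i : Fin n)
    (h : ∀ r, M r i.castSucc = M r i.succ) : M.detCol = 0 := by
  rw [detCol_eq_sum_ofFn]
  refine Perm.sum_sign_smul_eq_zero_of_swap_invariant (Fin.castSucc_lt_succ (i := i)).ne _
    fun σ => ?_
  obtain ⟨X, Z, hXZ⟩ := List.exists_prod_ofFn_eq_mul_mul (fun j => M (σ j) j) i
  rw [hXZ _ fun j h₁ h₂ => by rw [Perm.mul_apply, swap_apply_of_ne_of_ne h₁ h₂],
    hXZ _ fun _ _ _ => rfl]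
  simp only [Perm.mul_apply, swap_apply_left, swap_apply_right, h]
  rw [hM.1]

theorem IsManin.detCol_submatrix_swap_castSucc_succ (hM : M.IsManin) (i : Fin n) :
    (M.submatrix id (Equiv.swap i.castSucc i.succ)).detCol = -M.detCol := by
  rw [eq_neg_iff_add_eq_zero, detCol_eq_sum_ofFn, detCol_eq_sum_ofFn, ← sum_add_distrib]
  simp_rw [← smul_add]
  refine Perm.sum_sign_smul_eq_zero_of_swap_invariant (Fin.castSucc_lt_succ (i := i)).ne _
    fun σ => ?_
  obtain ⟨X, Z, hXZ⟩ := List.exists_prod_ofFn_eq_mul_mul (fun j => M (σ j) j) i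
  have hfix : ∀ j, j ≠ i.castSucc → j ≠ i.succ → Equiv.swap i.castSucc i.succ j = j :=
    fun j h₁ h₂ => swap_apply_of_ne_of_ne h₁ h₂
  simp only [submatrix_apply, id, Perm.mul_apply]
  repeat rw [hXZ _ fun j h₁ h₂ => by simp only [hfix j h₁ h₂]]
  simp only [swap_apply_left, swap_apply_right, ← add_mul, ← mul_add]
  congr 2
  have hcross := hM.2 (σ i.castSucc) (σ i.succ) i.castSucc i.succ
  rw [sub_eq_sub_iff_add_eq_add] at hcross
  rw [add_comm, ← hcross, add_comm]

end Adjacent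

section Square

variable {n : ℕ} {M : Matrix (Fin n) (Fin n) R}

theorem IsManin.detCol_submatrix_perm (hM : M.IsManin) (τ : Perm (Fin n)) :
    (M.submatrix id τ).detCol = (Perm.sign τ : ℤ) • M.detCol := by
  cases n with
  | zero => simp [Subsingleton.elim τ 1]
  | succ n =>
    have hτ : τ ∈ Submonoid.closure (Set.range fun i : Fin n => Equiv.swap i.castSucc i.succ) :=
      (Perm.mclosure_swap_castSucc_succ n).symm ▸ Submonoid.mem_top τ
    induction hτ using Submonoid.closure_induction generalizing M with
    | mem _ h =>
      obtain ⟨i, rfl⟩ := h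
      rw [hM.detCol_submatrix_swap_castSucc_succ,
        Perm.sign_swap (Fin.castSucc_lt_succ (i := i)).ne]
      simp
    | one => simp
    | mul σ τ _ _ ihσ ihτ =>
      change ((M.submatrix id σ).submatrix id τ).detCol = _
      rw [ihτ (hM.submatrix id σ), ihσ hM, smul_smul, Perm.sign_mul, Units.val_mul, mul_comm]

theorem IsManin.detCol_eq_zero_of_cols_eq (hM : M.IsManin) {j l : Fin n} (hjl : j ≠ l)
    (h : ∀ r, M r j = M r l) : M.detCol = 0 := by
  obtain ⟨m, rfl⟩ : ∃ m, n = m + 2 := ⟨n - 2, by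
    by_contra hn
    exact hjl (Fin.ext (by omega))⟩
  obtain ⟨τ, hτj, hτl⟩ :=
    Perm.exists_apply_eq_apply_eq (Fin.castSucc_lt_succ (i := (0 : Fin (m + 1)))).ne hjl
  have h0 := (hM.submatrix id τ).detCol_eq_zero_of_adjacent_cols_eq 0 fun r => by
    rw [submatrix_apply, submatrix_apply, hτj, hτl]
    exact h _
  rwa [hM.detCol_submatrix_perm, ← Units.smul_def, smul_eq_zero_iff_eq] at h0

theorem IsManin.detCol_submatrix_eq_zero_of_not_injective (hM : M.IsManin)
    {f : Fin n → Fin n} (hf : ¬Function.Injective f) : (M.submatrix id f).detCol = 0 := by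
  obtain ⟨j, l, hfjl, hjl⟩ : ∃ j l, f j = f l ∧ j ≠ l := by
    simpa [Function.Injective] using hf
  exact (hM.submatrix id f).detCol_eq_zero_of_cols_eq hjl fun r => by simp [hfjl]

theorem IsManin.sum_mul_detCol_submatrix (hM : M.IsManin) (c : (Fin n → Fin n) → R) :
    ∑ f, c f * (M.submatrix id f).detCol
      = (∑ τ : Perm (Fin n), (Perm.sign τ : ℤ) • c τ) * M.detCol := by
  rw [Fintype.sum_pi_eq_sum_perm _ fun f hf => by
    rw [hM.detCol_submatrix_eq_zero_of_not_injective hf, mul_zero], sum_mul]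
  simp only [hM.detCol_submatrix_perm, mul_smul_comm, smul_mul_assoc]

theorem IsManin.sum_detCol_submatrix_mul (hM : M.IsManin) (a : (Fin n → Fin n) → R) :
    ∑ f, (M.submatrix id f).detCol * a f
      = M.detCol * ∑ τ : Perm (Fin n), (Perm.sign τ : ℤ) • a τ := by
  rw [Fintype.sum_pi_eq_sum_perm _ fun f hf => by
    rw [hM.detCol_submatrix_eq_zero_of_not_injective hf, zero_mul], mul_sum]
  simp only [hM.detCol_submatrix_perm, mul_smul_comm, smul_mul_assoc]

end Square

section Rectangular

variable {n n' m : ℕ}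

theorem lie_central_mul_apply {C : Matrix (Fin n) (Fin n') R}
    (hC : ∀ i j, C i j ∈ Set.center R) (A : Matrix (Fin n') (Fin m) R) (i k : Fin n)
    (j l : Fin m) :
    ⁅(C * A) i j, (C * A) k l⁆ = ∑ p, ∑ q, C i p * C k q * ⁅A p j, A q l⁆ := by
  rw [mul_apply, mul_apply, sum_lie_sum]
  exact sum_congr rfl fun p _ => sum_congr rfl fun q _ =>
    lie_mul_mul_of_mem_center (hC i p) (hC k q) _ _

theorem lie_mul_central_apply {C : Matrix (Fin m) (Fin n') R}
    (hC : ∀ i j, C i j ∈ Set.center R) (A : Matrix (Fin n) (Fin m) R) (i k : Fin n)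
    (j l : Fin n') :
    ⁅(A * C) i j, (A * C) k l⁆ = ∑ p, ∑ q, C p j * C q l * ⁅A i p, A k q⁆ := by
  rw [mul_apply, mul_apply, sum_lie_sum]
  refine sum_congr rfl fun p _ => sum_congr rfl fun q _ => ?_
  rw [← ((hC p j).comm _).eq, ← ((hC q l).comm _).eq,
    lie_mul_mul_of_mem_center (hC p j) (hC q l)]

theorem IsManin.central_mul {A : Matrix (Fin n') (Fin m) R} (hA : A.IsManin)
    {C : Matrix (Fin n) (Fin n') R} (hC : ∀ i j, C i j ∈ Set.center R) : (C * A).IsManin := by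
  rw [isManin_iff_lie] at hA ⊢
  refine ⟨fun i k j => ?_, fun i k j l => ?_⟩
  · simp [lie_central_mul_apply hC, hA.1]
  · rw [lie_central_mul_apply hC, lie_central_mul_apply hC, sum_comm]
    exact sum_congr rfl fun p _ => sum_congr rfl fun q _ => by
      rw [hA.2, ((hC i q).comm _).eq]

theorem IsManin.mul_central {A : Matrix (Fin n) (Fin m) R} (hA : A.IsManin)
    {C : Matrix (Fin m) (Fin n') R} (hC : ∀ i j, C i j ∈ Set.center R) : (A * C).IsManin := by
  rw [isManin_iff_lie] at hA ⊢
  refine ⟨fun i k j => ?_, fun i k j l => ?_⟩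
  · rw [lie_mul_central_apply hC]
    refine sum_sum_eq_zero_of_antisymm _ (fun p q => ?_) fun p => by rw [hA.1, mul_zero]
    rw [hA.2 i k q p, ← lie_skew, mul_neg, ((hC q j).comm _).eq]
  · rw [lie_mul_central_apply hC, lie_mul_central_apply hC]
    exact sum_congr rfl fun p _ => sum_congr rfl fun q _ => by rw [hA.2]

end Rectangular

section CentralProduct

variable {n : ℕ} {C A : Matrix (Fin n) (Fin n) R}

theorem detCol_central_mul_eq_sum (hC : ∀ i j, C i j ∈ Set.center R) :
    (C * A).detCol
      = ∑ f : Fin n → Fin n, (C.submatrix id f).detCol * (List.ofFn fun i => A (f i) i).prod := by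
  simp only [detCol_eq_sum_ofFn, mul_apply, submatrix_apply, id, sum_mul, smul_mul_assoc]
  rw [sum_comm]
  refine sum_congr rfl fun σ _ => ?_
  rw [List.prod_ofFn_sum_mul_of_mem_center (fun i p => C (σ i) p) (fun i p => A p i)
    fun _ _ => hC _ _, smul_sum]

theorem detCol_mul_central_eq_sum (hC : ∀ i j, C i j ∈ Set.center R) :
    (A * C).detCol
      = ∑ f : Fin n → Fin n, (List.ofFn fun i => C (f i) i).prod * (A.submatrix id f).detCol := by
  simp only [detCol_eq_sum_ofFn, mul_apply, submatrix_apply, id, mul_sum, mul_smul_comm]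
  rw [sum_comm]
  refine sum_congr rfl fun σ _ => ?_
  simp only [fun i p => ((hC p i).comm (A (σ i) p)).eq.symm]
  rw [List.prod_ofFn_sum_mul_of_mem_center (fun i p => C p i) (fun i p => A (σ i) p)
    fun _ _ => hC _ _, smul_sum]

theorem detCol_central_mul (hC : ∀ i j, C i j ∈ Set.center R) :
    (C * A).detCol = C.detCol * A.detCol := by
  rw [detCol_central_mul_eq_sum hC, (isManin_of_mem_center hC).sum_detCol_submatrix_mul,
    detCol_eq_sum_ofFn A]

theorem IsManin.detCol_mul_central (hA : A.IsManin) (hC : ∀ i j, C i j ∈ Set.center R) :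
    (A * C).detCol = C.detCol * A.detCol := by
  rw [detCol_mul_central_eq_sum hC, hA.sum_mul_detCol_submatrix, detCol_eq_sum_ofFn C]

end CentralProduct

end Matrix

/-- if `A` is a Manin matrix and `C` has central entries, then `CA` and
`AC` are Manin matrices and `detCol (CA) = detCol (AC) = det C * detCol A`, where the
determinant of the central matrix `C` is its (order-independent) column determinant. -/
theorem isManin_central_mul {R : Type*} [Ring R] {n : ℕ}
    (A C : Matrix (Fin n) (Fin n) R) (hA : A.IsManin)
    (hC : ∀ i j : Fin n, C i j ∈ Set.center R) :
    (C * A).IsManin ∧ (A * C).IsManin ∧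
    (C * A).detCol = C.detCol * A.detCol ∧
    (A * C).detCol = C.detCol * A.detCol :=
  ⟨hA.central_mul hC, hA.mul_central hC, Matrix.detCol_central_mul hC,
    hA.detCol_mul_central hC⟩
end

section
/- Let M be an n×n Manin matrix over an associative unital (possibly noncommutative) ring R, and let X be an arbitrary k×(n−k) matrix with entries in R (no commutativity assumptions on the entries of X). Then det^col( M · [[1_k, X],[0, 1_{n−k}]] ) = det^col(M), where [[1_k, X],[0, 1_{n−k}]] denotes the n×n block upper-unitriangular matrix with identity diagonal blocks and upper-right block X. -/
open scoped BigOperators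

/-!
Expanding each column of `M * U` as `∑ j, M i j * U j c` writes `det^col (M * U)` as a sum over
column choices `g` of weighted column determinants `∑ σ, sgn σ ∏ c, M (σ c) (g c) * U (g c) c`.
The argument works for any upper unitriangular `U`. The term `g = id` is `det^col M`. For any
other `g`, let `c` be its first non-fixed point: if `g c > c` the weight `U (g c) c` vanishes;
if `g c < c`, column `g c` of `M` is chosen at the two positions `g c` and `c`, and all weights
before `c` are `1`.

Such a weighted column determinant of a Manin matrix vanishes. When the repeated column sits at
adjacent positions `u, u + 1`, the terms for `σ` and `σ * swap u (u + 1)` cancel because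
entries of a column commute; otherwise, exchanging the column choices at `c - 1` and `c` only
changes the sign, by the cross-commutator relation, and brings the repeat one step closer.
Both steps need the weight at the first of the two positions to be `1`, so that the two entries
are adjacent factors.
-/

open Equiv List

theorem Finset.sum_perm_eq_zero_of_mul_swap {α G : Type*} [Fintype α] [DecidableEq α]
    [AddCommGroup G] (f : Perm α → G) {u v : α} (huv : u ≠ v)
    (hf : ∀ σ, f (σ * swap u v) = -f σ) : ∑ σ, f σ = 0 :=
  Finset.sum_involution (fun σ _ => σ * swap u v) (fun σ _ => by rw [hf, add_neg_cancel])
    (fun σ _ _ h => huv (swap_eq_one_iff.mp (mul_eq_left.mp h)))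
    (fun σ _ => Finset.mem_univ _) (fun σ _ => mul_swap_mul_self u v σ)

theorem List.val_lt_of_mem_take_finRange {n u : ℕ} {c : Fin n} (h : c ∈ (finRange n).take u) :
    (c : ℕ) < u := by
  obtain ⟨i, hi, rfl⟩ := mem_iff_getElem.mp h
  simp only [length_take, length_finRange, lt_min_iff] at hi
  simpa using hi.1

theorem List.le_val_of_mem_drop_finRange {n u : ℕ} {c : Fin n} (h : c ∈ (finRange n).drop u) :
    u ≤ (c : ℕ) := by
  obtain ⟨i, hi, rfl⟩ := mem_iff_getElem.mp h
  simp

theorem List.finRange_eq_take_append_cons {n : ℕ} {u v : Fin n} (huv : (u : ℕ) + 1 = v) :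
    finRange n = (finRange n).take u ++ u :: v :: (finRange n).drop (u + 2) := by
  conv_lhs => rw [← take_append_drop u (finRange n)]
  rw [drop_eq_getElem_cons (by simp), drop_eq_getElem_cons (by simp; omega)]
  congr 2
  · ext; simp
  · congr 1
    ext; simp [huv]

theorem List.exists_prod_map_finRange_eq {M : Type*} [Monoid M] {n : ℕ} {u v : Fin n}
    (huv : (u : ℕ) + 1 = v) (F₀ : Fin n → M) :
    ∃ L R : M, ∀ F : Fin n → M, (∀ c, c ≠ u → c ≠ v → F c = F₀ c) →
      ((finRange n).map F).prod = L * (F u * F v) * R := by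
  refine ⟨(((finRange n).take u).map F₀).prod, (((finRange n).drop (u + 2)).map F₀).prod,
    fun F hF => ?_⟩
  have hL : ((finRange n).take u).map F = ((finRange n).take u).map F₀ :=
    map_congr_left fun c hc => by
      have := val_lt_of_mem_take_finRange hc
      exact hF c (Fin.ne_of_val_ne (by omega)) (Fin.ne_of_val_ne (by omega))
  have hR : ((finRange n).drop (u + 2)).map F = ((finRange n).drop (u + 2)).map F₀ :=
    map_congr_left fun c hc => by
      have := le_val_of_mem_drop_finRange hc
      exact hF c (Fin.ne_of_val_ne (by omega)) (Fin.ne_of_val_ne (by omega))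
  conv_lhs => rw [finRange_eq_take_append_cons huv]
  simp only [map_append, map_cons, prod_append, prod_cons, hL, hR, mul_assoc]

theorem List.prod_map_finRange_sum {S κ : Type*} [Semiring S] [Fintype κ] :
    ∀ {n : ℕ} (E : Fin n → κ → S),
      ((finRange n).map fun c => ∑ j, E c j).prod
        = ∑ g : Fin n → κ, ((finRange n).map fun c => E c (g c)).prod
  | 0, E => by simp
  | n + 1, E => by
    rw [← (Fin.consEquiv fun _ => κ).sum_comp, Fintype.sum_prod_type]
    simp only [finRange_succ, map_cons, prod_cons, map_map, Function.comp_def,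
      prod_map_finRange_sum fun c => E c.succ, Finset.sum_mul, Finset.mul_sum]
    exact Finset.sum_comm

namespace Matrix

variable {R : Type*} [Ring R] {n m : ℕ}

def weightedDetCol (M : Matrix (Fin n) (Fin m) R) (g : Fin n → Fin m)
    (y : Fin n → R) : R :=
  ∑ σ : Perm (Fin n), (Perm.sign σ : ℤ) • ((finRange n).map fun c => M (σ c) (g c) * y c).prod

theorem weightedDetCol_id_one (M : Matrix (Fin n) (Fin n) R) :
    M.weightedDetCol id 1 = M.detCol := by
  simp [weightedDetCol, detCol]

theorem weightedDetCol_eq_zero_of_weight_eq_zero (M : Matrix (Fin n) (Fin m) R)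
    {g : Fin n → Fin m} {y : Fin n → R} {c : Fin n} (hy : y c = 0) :
    M.weightedDetCol g y = 0 :=
  Finset.sum_eq_zero fun σ _ => by
    rw [List.prod_eq_zero (mem_map.mpr ⟨c, mem_finRange c, by rw [hy, mul_zero]⟩), smul_zero]

theorem detCol_mul_eq_sum_weightedDetCol (M U : Matrix (Fin n) (Fin n) R) :
    (M * U).detCol = ∑ g : Fin n → Fin n, M.weightedDetCol g fun c => U (g c) c := by
  simp only [detCol, weightedDetCol, mul_apply, prod_map_finRange_sum, Finset.smul_sum]
  exact Finset.sum_comm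

theorem weightedDetCol_eq_zero_of_adjacent_eq (M : Matrix (Fin n) (Fin m) R)
    (hcol : ∀ i k j, Commute (M i j) (M k j)) {g : Fin n → Fin m} {y : Fin n → R}
    {u v : Fin n} (huv : (u : ℕ) + 1 = v) (hg : g u = g v) (hy : y u = 1) :
    M.weightedDetCol g y = 0 := by
  have hne : u ≠ v := Fin.ne_of_val_ne (by omega)
  refine Finset.sum_perm_eq_zero_of_mul_swap _ hne fun σ => ?_
  obtain ⟨L, L', hLL'⟩ := exists_prod_map_finRange_eq huv fun c => M (σ c) (g c) * y c
  rw [hLL' _ fun _ _ _ => rfl,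
    hLL' _ fun c hu hv => by rw [Perm.mul_apply, swap_apply_of_ne_of_ne hu hv],
    Perm.sign_mul, Perm.sign_swap hne, mul_neg_one, Units.val_neg, neg_smul]
  simp only [Perm.mul_apply, swap_apply_left, swap_apply_right, hy, hg, mul_one,
    ← mul_assoc, (hcol (σ v) (σ u) (g v)).eq]

theorem weightedDetCol_add_comp_swap_eq_zero (M : Matrix (Fin n) (Fin m) R)
    (hcross : ∀ i k j l, M i j * M k l - M k l * M i j = M k j * M i l - M i l * M k j)
    {g : Fin n → Fin m} {y : Fin n → R} {u v : Fin n} (huv : (u : ℕ) + 1 = v) (hy : y u = 1) :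
    M.weightedDetCol g y + M.weightedDetCol (g ∘ Equiv.swap u v) y = 0 := by
  have hne : u ≠ v := Fin.ne_of_val_ne (by omega)
  rw [weightedDetCol, weightedDetCol, ← Finset.sum_add_distrib]
  refine Finset.sum_perm_eq_zero_of_mul_swap _ hne fun σ => ?_
  obtain ⟨L, L', hLL'⟩ := exists_prod_map_finRange_eq huv fun c => M (σ c) (g c) * y c
  have split : ∀ (τ : Perm (Fin n)) (h : Fin n → Fin m),
      (∀ c, c ≠ u → c ≠ v → τ c = σ c ∧ h c = g c) →
      ((finRange n).map fun c => M (τ c) (h c) * y c).prod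
        = L * (M (τ u) (h u) * y u * (M (τ v) (h v) * y v)) * L' := fun τ h hτh =>
    hLL' _ fun c hu hv => by rw [(hτh c hu hv).1, (hτh c hu hv).2]
  have hs : ∀ c, c ≠ u → c ≠ v → Equiv.swap u v c = c := fun _ => swap_apply_of_ne_of_ne
  rw [split σ g fun _ _ _ => ⟨rfl, rfl⟩,
    split σ (g ∘ Equiv.swap u v) fun c hu hv => ⟨rfl, congrArg g (hs c hu hv)⟩,
    split (σ * Equiv.swap u v) g fun c hu hv => ⟨congrArg σ (hs c hu hv), rfl⟩,
    split (σ * Equiv.swap u v) (g ∘ Equiv.swap u v)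
      fun c hu hv => ⟨congrArg σ (hs c hu hv), congrArg g (hs c hu hv)⟩,
    Perm.sign_mul, Perm.sign_swap hne, mul_neg_one, Units.val_neg, neg_smul, neg_smul,
    ← neg_add, ← smul_add, ← smul_add, neg_inj]
  simp only [Perm.mul_apply, Function.comp_apply, swap_apply_left,
    swap_apply_right, hy, mul_one]
  congr 1
  set A := M (σ u) (g u)
  set B := M (σ v) (g v)
  set C := M (σ v) (g u)
  set D := M (σ u) (g v)
  have hABCD : C * D + B * A = A * B + D * C := by
    rw [eq_comm, ← sub_eq_sub_iff_add_eq_add]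
    exact hcross (σ u) (σ v) (g u) (g v)
  calc _ = L * ((C * D + B * A) * y v) * L' := by noncomm_ring
    _ = L * ((A * B + D * C) * y v) * L' := by rw [hABCD]
    _ = _ := by noncomm_ring

theorem IsManin.weightedDetCol_eq_zero {M : Matrix (Fin n) (Fin m) R} (hM : M.IsManin)
    {g : Fin n → Fin m} {y : Fin n → R} {a b : Fin n} (hab : a < b) (hg : g a = g b)
    (hy : ∀ c < b, y c = 1) : M.weightedDetCol g y = 0 := by
  obtain ⟨d, hd⟩ : ∃ d, (b : ℕ) = a + 1 + d := ⟨b - a - 1, by omega⟩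
  induction d generalizing b g with
  | zero => exact weightedDetCol_eq_zero_of_adjacent_eq M hM.1 (by omega) hg (hy a hab)
  | succ d ih =>
    set u : Fin n := ⟨b - 1, by omega⟩
    have hub : (u : ℕ) + 1 = b := by simp only [u]; omega
    have hau : a < u := Fin.lt_def.mpr (by simp only [u]; omega)
    have hswap := weightedDetCol_add_comp_swap_eq_zero M hM.2 (g := g) hub (hy u (by omega))
    rwa [ih (g := g ∘ Equiv.swap u b) hau ?_ (fun c hc => hy c (hc.trans (by omega))) (by omega),
      add_zero] at hswap
    rw [Function.comp_apply, Function.comp_apply, swap_apply_left,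
      swap_apply_of_ne_of_ne hau.ne hab.ne, hg]

theorem blockTriangular_fromBlocks_submatrix_finSumFinEquiv {k l : ℕ}
    {A : Matrix (Fin k) (Fin k) R} {D : Matrix (Fin l) (Fin l) R} (hA : A.BlockTriangular id)
    (hD : D.BlockTriangular id) (B : Matrix (Fin k) (Fin l) R) :
    ((fromBlocks A B 0 D).submatrix finSumFinEquiv.symm finSumFinEquiv.symm).BlockTriangular id := by
  intro i j hij
  obtain ⟨i, rfl⟩ := finSumFinEquiv.surjective i
  obtain ⟨j, rfl⟩ := finSumFinEquiv.surjective j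
  rcases i with a | s <;> rcases j with b | t <;>
    simp only [id, Fin.lt_def, finSumFinEquiv_apply_left, finSumFinEquiv_apply_right,
      Fin.val_castAdd, Fin.val_natAdd, submatrix_apply, finSumFinEquiv_symm_apply_castAdd,
      finSumFinEquiv_symm_apply_natAdd,
      fromBlocks_apply₁₁, fromBlocks_apply₁₂, fromBlocks_apply₂₁, fromBlocks_apply₂₂,
      zero_apply] at hij ⊢
  · exact hA (Fin.lt_def.mpr hij)
  · exact absurd a.isLt (by omega)
  · exact hD (show t < s from Fin.lt_def.mpr (by omega))

theorem IsManin.detCol_mul_of_unitriangular {M U : Matrix (Fin n) (Fin n) R} (hM : M.IsManin)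
    (hU : U.BlockTriangular id) (hU₁ : ∀ i, U i i = 1) : (M * U).detCol = M.detCol := by
  rw [detCol_mul_eq_sum_weightedDetCol, Finset.sum_eq_single id, ← weightedDetCol_id_one]
  · exact congrArg _ (funext hU₁)
  · intro g _ hg
    obtain ⟨c, hc, hmin⟩ := wellFounded_lt.has_min {c | g c ≠ c}
      (not_forall.mp fun h => hg (funext h))
    have hfix : ∀ c' < c, g c' = c' := fun c' h' => not_not.mp fun h => hmin c' h h'
    rcases lt_or_gt_of_ne hc with hlt | hgt
    · exact hM.weightedDetCol_eq_zero hlt (hfix _ hlt) fun c' h' => by rw [hfix c' h', hU₁]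
    · exact weightedDetCol_eq_zero_of_weight_eq_zero M (c := c) (hU hgt)
  · exact fun h => absurd (Finset.mem_univ id) h

end Matrix

/-- multiplying a Manin matrix on the right by a block upper-unitriangular
matrix `[[1, X], [0, 1]]` (with arbitrary upper-right block `X`) does not change the
column determinant. -/
theorem detCol_mul_block_unitriangular {R : Type*} [Ring R] {k l : ℕ}
    (M : Matrix (Fin (k + l)) (Fin (k + l)) R) (hM : M.IsManin)
    (X : Matrix (Fin k) (Fin l) R) :
    (M * (Matrix.fromBlocks 1 X 0 1).submatrix
        (⇑finSumFinEquiv.symm) (⇑finSumFinEquiv.symm)).detCol = M.detCol := by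
  refine hM.detCol_mul_of_unitriangular (Matrix.blockTriangular_fromBlocks_submatrix_finSumFinEquiv
    Matrix.blockTriangular_one Matrix.blockTriangular_one X) fun i => ?_
  obtain ⟨i, rfl⟩ := finSumFinEquiv.surjective i
  rcases i with a | s <;> simp
end
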